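/- arXiv:2306.09073 — 2 statements merged into one kernel-verified Lean document; each statement's English description precedes it below -/
import Mathlib

section
/- With κ(c) and e(c) the unique positive roots of κ − 1 − c/κ² = 0 and e + 1 − c/e² = 0 respectively, the function F(c) = (κ(c)²/2 − κ(c) + c/κ(c)) + (e(c)²/2 + e(c) + c/e(c)) satisfies F(c) < 0 for all sufficiently small c > 0; in particular there exists c* > 0 such that F(c) < 0 and e(c) < κ(c) for all c ∈ (0, c*). -/
theorem stmt11 (κ e : ℝ → ℝ)
    (hκ : ∀ c > 0, 0 < κ c ∧ κ c - 1 - c/(κ c)^2 = 0)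
    (he : ∀ c > 0, 0 < e c ∧ e c + 1 - c/(e c)^2 = 0) :
    ∃ cstar > 0, ∀ c ∈ Set.Ioo 0 cstar,
      ((κ c)^2/2 - κ c + c/(κ c)) + ((e c)^2/2 + e c + c/(e c)) < 0 ∧ e c < κ c := by
  refine ⟨0.01, by norm_num, ?_⟩
  rintro c ⟨hc0, hc1⟩
  obtain ⟨hκ0, hκe⟩ := hκ c hc0
  obtain ⟨he0, hee⟩ := he c hc0
  have hκne : (κ c) ≠ 0 := ne_of_gt hκ0
  have hene : (e c) ≠ 0 := ne_of_gt he0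
  have h1 : c = (κ c)^2 * (κ c - 1) := by
    field_simp at hκe
    nlinarith [hκe]
  have h2 : c = (e c)^2 * (e c + 1) := by
    field_simp at hee
    nlinarith [hee]
  have hκ1 : 1 < κ c := by nlinarith [sq_nonneg (κ c)]
  have hκub : κ c < 1.1 := by nlinarith [sq_nonneg (κ c - 1)]
  have heub : e c < 0.1 := by nlinarith [sq_nonneg (e c)]
  have hcκ : c / κ c = (κ c)^2 - κ c := by
    rw [div_eq_iff hκne]; linear_combination h1
  have hce : c / e c = (e c)^2 + e c := by
    rw [div_eq_iff hene]; linear_combination h2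
  rw [hcκ, hce]
  constructor
  · nlinarith [sq_nonneg (e c), mul_pos he0 he0]
  · linarith
end

section
/- Define s(h) = 4h³/27 − (2/3)^{4/3}·h^{5/3}·r for a fixed r ∈ ℝ and define h(s) = 2^{−2/3}·3·s^{1/3} + 2^{−4/9}·3^{1/3}·s^{−1/9}·r. Then h(s(h)) = h + O(h^{−5/3}) as h → ∞, i.e. there exist C, h_0 > 0 with |h(s(h)) − h| ≤ C·h^{−5/3} for all h ≥ h_0. -/
/-!
Write `s(h) = (4/27) h³ (1 - ε)` with `ε = 3 (3/2)^{2/3} r h^{-4/3}`. Then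
`h(s(h)) = h (1 - ε)^{1/3} + (3/2)^{2/3} r h^{-1/3} (1 - ε)^{-1/9}`, and the first-order term
`-h ε / 3` of the first summand is exactly minus the leading part `(3/2)^{2/3} r h^{-1/3}` of the
second. What is left is `h · O(ε²) + h^{-1/3} · O(ε) = O(h^{-5/3})`; the two root estimates follow
from `c^{n-1} |a - c| ≤ |aⁿ - cⁿ|` for `a, c ≥ 0`.
-/

open Real Finset

theorem pow_pred_mul_abs_sub_le_abs_pow_sub_pow {a c : ℝ} (ha : 0 ≤ a) (hc : 0 ≤ c) {n : ℕ}
    (hn : n ≠ 0) : c ^ (n - 1) * |a - c| ≤ |a ^ n - c ^ n| := by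
  have hsum : c ^ (n - 1) ≤ ∑ i ∈ range n, a ^ i * c ^ (n - 1 - i) := by
    simpa using single_le_sum (f := fun i => a ^ i * c ^ (n - 1 - i))
      (fun i _ => by positivity) (mem_range.2 (Nat.pos_of_ne_zero hn))
  rw [← geom_sum₂_mul, abs_mul, abs_of_nonneg ((pow_nonneg hc _).trans hsum)]
  exact mul_le_mul_of_nonneg_right hsum (abs_nonneg _)

theorem abs_one_sub_rpow_third_sub_le {x : ℝ} (hx : |x| ≤ 1 / 2) :
    |(1 - x) ^ ((1:ℝ)/3) - (1 - x/3)| ≤ x ^ 2 := by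
  obtain ⟨hxl, hxu⟩ := abs_le.1 hx
  have hcube : ((1 - x) ^ ((1:ℝ)/3)) ^ 3 = 1 - x := by
    rw [← rpow_mul_natCast (by linarith)]; norm_num
  have key := pow_pred_mul_abs_sub_le_abs_pow_sub_pow
    (rpow_nonneg (by linarith : (0:ℝ) ≤ 1 - x) ((1:ℝ)/3)) (by linarith : (0:ℝ) ≤ 1 - x/3)
    three_ne_zero
  -- the cube of the linear approximation misses `1 - x` only at second order
  rw [hcube, show 1 - x - (1 - x/3) ^ 3 = x ^ 2 * (x/27 - 1/3) by ring, abs_mul,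
    abs_of_nonneg (sq_nonneg x), abs_of_neg (by linarith : x/27 - 1/3 < 0)] at key
  nlinarith [sq_nonneg x, abs_nonneg ((1 - x) ^ ((1:ℝ)/3) - (1 - x/3)),
    mul_nonneg (sq_nonneg x) (abs_nonneg ((1 - x) ^ ((1:ℝ)/3) - (1 - x/3)))]

theorem abs_one_sub_rpow_neg_ninth_sub_one_le {x : ℝ} (hx : |x| ≤ 1 / 2) :
    |(1 - x) ^ (-(1:ℝ)/9) - 1| ≤ 2 * |x| := by
  obtain ⟨hxl, hxu⟩ := abs_le.1 hx
  have hpos : 0 < 1 - x := by linarith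
  have hninth : ((1 - x) ^ (-(1:ℝ)/9)) ^ 9 = (1 - x)⁻¹ := by
    rw [← rpow_mul_natCast hpos.le]; norm_num [rpow_neg_one]
  have key := pow_pred_mul_abs_sub_le_abs_pow_sub_pow (rpow_nonneg hpos.le (-(1:ℝ)/9))
    zero_le_one (n := 9) (by norm_num)
  rw [hninth, one_pow, one_pow, one_mul] at key
  calc |(1 - x) ^ (-(1:ℝ)/9) - 1| ≤ |(1 - x)⁻¹ - 1| := key
    _ = |x| / (1 - x) := by
      rw [show (1 - x)⁻¹ - 1 = x / (1 - x) by field_simp; ring, abs_div, abs_of_pos hpos]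
    _ ≤ 2 * |x| := by rw [div_le_iff₀ hpos]; nlinarith [abs_nonneg x]

theorem two_rpow_mul_three_mul_rpow_four_div_27 :
    (2:ℝ)^(-(2:ℝ)/3) * 3 * ((4:ℝ)/27)^((1:ℝ)/3) = 1 := by
  rw [← pow_left_inj₀ (by positivity) zero_le_one three_ne_zero]
  simp only [mul_pow, ← rpow_mul_natCast (by norm_num : (0:ℝ) ≤ 2),
    ← rpow_mul_natCast (by norm_num : (0:ℝ) ≤ 4/27)]
  norm_num

theorem two_rpow_mul_three_rpow_mul_rpow_four_div_27 :
    (2:ℝ)^(-(4:ℝ)/9) * (3:ℝ)^((1:ℝ)/3) * ((4:ℝ)/27)^(-(1:ℝ)/9) = ((3:ℝ)/2)^((2:ℝ)/3) := by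
  rw [← pow_left_inj₀ (by positivity) (by positivity) (by norm_num : 9 ≠ 0)]
  simp only [mul_pow, ← rpow_mul_natCast (by norm_num : (0:ℝ) ≤ 2),
    ← rpow_mul_natCast (by norm_num : (0:ℝ) ≤ 3), ← rpow_mul_natCast (by norm_num : (0:ℝ) ≤ 4/27),
    ← rpow_mul_natCast (by norm_num : (0:ℝ) ≤ 3/2)]
  norm_num

theorem two_thirds_rpow_four_thirds :
    ((2:ℝ)/3)^((4:ℝ)/3) = 4/27 * (3 * ((3:ℝ)/2)^((2:ℝ)/3)) := by
  rw [← pow_left_inj₀ (by positivity) (by positivity) three_ne_zero]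
  simp only [mul_pow, ← rpow_mul_natCast (by norm_num : (0:ℝ) ≤ 2/3),
    ← rpow_mul_natCast (by norm_num : (0:ℝ) ≤ 3/2)]
  norm_num

noncomputable def sOfH (r h : ℝ) : ℝ := 4*h^3/27 - (2/3:ℝ)^((4:ℝ)/3) * h^((5:ℝ)/3) * r

noncomputable def hOfS (r s : ℝ) : ℝ :=
  (2:ℝ)^(-(2:ℝ)/3) * 3 * s^((1:ℝ)/3) + (2:ℝ)^(-(4:ℝ)/9) * (3:ℝ)^((1:ℝ)/3) * s^(-(1:ℝ)/9) * r

section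

variable {h : ℝ} (hpos : 0 < h)
include hpos

theorem sOfH_eq (r : ℝ) :
    sOfH r h = 4/27 * h^3 * (1 - 3 * ((3:ℝ)/2)^((2:ℝ)/3) * r * h^(-(4:ℝ)/3)) := by
  have : h^((5:ℝ)/3) = h^3 * h^(-(4:ℝ)/3) := by
    rw [← rpow_natCast, ← rpow_add hpos]; norm_num
  rw [sOfH, two_thirds_rpow_four_thirds, this]; ring

theorem hOfS_eq (r : ℝ) {ε : ℝ} (hε : ε ≤ 1) :
    hOfS r (4/27 * h^3 * (1 - ε)) =
      h * (1 - ε)^((1:ℝ)/3) + ((3:ℝ)/2)^((2:ℝ)/3) * r * h^(-(1:ℝ)/3) * (1 - ε)^(-(1:ℝ)/9) := by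
  have hh3 : (0:ℝ) ≤ 4/27 * h^3 := by positivity
  have hcube (p : ℝ) : (h^3)^p = h^(3 * p) := by rw [← rpow_natCast, ← rpow_mul hpos.le]; norm_num
  rw [hOfS, mul_rpow hh3 (by linarith), mul_rpow hh3 (by linarith),
    mul_rpow (by norm_num) (by positivity), mul_rpow (by norm_num) (by positivity), hcube, hcube,
    show (3:ℝ) * (1/3) = 1 by norm_num, show (3:ℝ) * (-1/9) = -1/3 by norm_num, rpow_one]
  linear_combination (h * (1 - ε)^((1:ℝ)/3)) * two_rpow_mul_three_mul_rpow_four_div_27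
    + (h^(-(1:ℝ)/3) * r * (1 - ε)^(-(1:ℝ)/9)) * two_rpow_mul_three_rpow_mul_rpow_four_div_27

theorem abs_hOfS_sOfH_sub_le (r : ℝ)
    (hε : |3 * ((3:ℝ)/2)^((2:ℝ)/3) * r * h^(-(4:ℝ)/3)| ≤ 1/2) :
    |hOfS r (sOfH r h) - h| ≤ 15 * (((3:ℝ)/2)^((2:ℝ)/3))^2 * r^2 * h^(-(5:ℝ)/3) := by
  set M := ((3:ℝ)/2)^((2:ℝ)/3)
  set ε := 3 * M * r * h^(-(4:ℝ)/3) with hε_def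
  have hM : 0 < M := by positivity
  have h13 : h * h^(-(4:ℝ)/3) = h^(-(1:ℝ)/3) := by
    rw [← rpow_one_add' hpos.le (by norm_num)]; norm_num
  have h53 : h^(-(1:ℝ)/3) * h^(-(4:ℝ)/3) = h^(-(5:ℝ)/3) := by
    rw [← rpow_add hpos]; norm_num
  rw [sOfH_eq hpos, hOfS_eq hpos r (by linarith [(abs_le.1 hε).2])]
  have hsplit : h * (1 - ε)^((1:ℝ)/3) + M * r * h^(-(1:ℝ)/3) * (1 - ε)^(-(1:ℝ)/9) - h
      = h * ((1 - ε)^((1:ℝ)/3) - (1 - ε/3))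
        + M * r * h^(-(1:ℝ)/3) * ((1 - ε)^(-(1:ℝ)/9) - 1) := by
    linear_combination (-(M * r)) * h13
  have hfirst : |h * ((1 - ε)^((1:ℝ)/3) - (1 - ε/3))| ≤ 9 * M^2 * r^2 * h^(-(5:ℝ)/3) := by
    rw [abs_mul, abs_of_pos hpos]
    calc h * |(1 - ε)^((1:ℝ)/3) - (1 - ε/3)| ≤ h * ε^2 :=
          mul_le_mul_of_nonneg_left (abs_one_sub_rpow_third_sub_le hε) hpos.le
      _ = 9 * M^2 * r^2 * h^(-(5:ℝ)/3) := by rw [← h53, ← h13]; ring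
  have hsecond : |M * r * h^(-(1:ℝ)/3) * ((1 - ε)^(-(1:ℝ)/9) - 1)|
      ≤ 6 * M^2 * r^2 * h^(-(5:ℝ)/3) := by
    rw [abs_mul, abs_mul, abs_mul, abs_of_pos hM, abs_of_pos (rpow_pos_of_pos hpos _)]
    calc M * |r| * h^(-(1:ℝ)/3) * |(1 - ε)^(-(1:ℝ)/9) - 1|
        ≤ M * |r| * h^(-(1:ℝ)/3) * (2 * |ε|) :=
          mul_le_mul_of_nonneg_left (abs_one_sub_rpow_neg_ninth_sub_one_le hε) (by positivity)
      _ = 6 * M^2 * r^2 * h^(-(5:ℝ)/3) := by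
          rw [hε_def, abs_mul, abs_mul, abs_of_pos (by positivity : 0 < 3 * M),
            abs_of_pos (rpow_pos_of_pos hpos _), ← h53, ← sq_abs r]
          ring
  rw [hsplit]
  linarith [abs_add_le (h * ((1 - ε)^((1:ℝ)/3) - (1 - ε/3)))
    (M * r * h^(-(1:ℝ)/3) * ((1 - ε)^(-(1:ℝ)/9) - 1))]

end

theorem stmt15 (r : ℝ) :
    ∃ C > 0, ∃ h0 > 0, ∀ h ≥ h0,
      |(2:ℝ)^(-(2:ℝ)/3) * 3 * (4*h^3/27 - (2/3:ℝ)^((4:ℝ)/3) * h^((5:ℝ)/3) * r)^((1:ℝ)/3)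
        + (2:ℝ)^(-(4:ℝ)/9) * (3:ℝ)^((1:ℝ)/3)
            * (4*h^3/27 - (2/3:ℝ)^((4:ℝ)/3) * h^((5:ℝ)/3) * r)^(-(1:ℝ)/9) * r
        - h| ≤ C * h^(-(5:ℝ)/3) := by
  set K := 3 * ((3:ℝ)/2)^((2:ℝ)/3)
  have hK : 0 < K := by positivity
  refine ⟨15 * (((3:ℝ)/2)^((2:ℝ)/3))^2 * r^2 + 1, by positivity, 1 + 2 * K * |r|, by positivity,
    fun h hh => ?_⟩
  have hKr : 0 ≤ K * |r| := by positivity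
  have hpos : 0 < h := by linarith
  have hε : |K * r * h^(-(4:ℝ)/3)| ≤ 1/2 := by
    have hdecay : h^(-(4:ℝ)/3) ≤ h⁻¹ := by
      simpa [rpow_neg_one] using rpow_le_rpow_of_exponent_le (by linarith : 1 ≤ h)
        (by norm_num : -(4:ℝ)/3 ≤ -1)
    rw [abs_mul, abs_mul, abs_of_pos hK, abs_of_pos (rpow_pos_of_pos hpos _)]
    calc K * |r| * h^(-(4:ℝ)/3) ≤ K * |r| * h⁻¹ := by gcongr
      _ ≤ 1/2 := by rw [← div_eq_mul_inv, div_le_iff₀ hpos]; linarith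
  change |hOfS r (sOfH r h) - h| ≤ _
  exact (abs_hOfS_sOfH_sub_le hpos r hε).trans (by gcongr; linarith)
end
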